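/- For loads x_1, ..., x_k that are nonnegative integers summing to n, the population variance Σ(x_i − n/k)²/k is minimized exactly when every x_i ∈ {⌊n/k⌋, ⌈n/k⌉}. -/

import Mathlib

/-!
Write `q = ⌊n/k⌋`. The identity `(a - c)² = (a - q)(a - q - 1) + (2q + 1 - 2c) a + c² - q² - q`
shows that, among load vectors with total `n`, the variance is `∑ (x_i - q)(x_i - q - 1)` up to
an additive constant and a positive factor. For natural numbers `a` the product
`(a - q)(a - q - 1)` is nonnegative and vanishes exactly when `a ∈ {q, q + 1}`, and loads in
`{q, q + 1}` with total `n` exist, so these are exactly the minimizers. Among them a load `q + 1`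
forces `k ∤ n`, and then `⌈n/k⌉ = q + 1`.
-/

open Finset

theorem Nat.add_sub_one_div_eq_or (n k : ℕ) :
    (n + k - 1) / k = n / k ∨ (n + k - 1) / k = n / k + 1 := by
  rcases Nat.eq_zero_or_pos k with rfl | hk
  · simp
  have hlo : n / k ≤ (n + k - 1) / k := Nat.div_le_div_right (by omega)
  have hhi : (n + k - 1) / k < n / k + 2 := by
    rw [Nat.div_lt_iff_lt_mul hk, add_mul]
    have := Nat.lt_div_mul_add hk (a := n)
    omega
  omega

theorem Nat.add_sub_one_div_eq_div_add_one {n k : ℕ} (hk : 0 < k) (h : n / k * k < n) :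
    (n + k - 1) / k = n / k + 1 := by
  have : n / k + 1 ≤ (n + k - 1) / k := by
    rw [Nat.le_div_iff_mul_le hk, add_mul]
    omega
  have := Nat.add_sub_one_div_eq_or n k
  omega

theorem cast_sub_mul_cast_sub_sub_one_nonneg {R : Type*} [Ring R] [LinearOrder R]
    [IsStrictOrderedRing R] (a q : ℕ) : 0 ≤ ((a : R) - q) * (a - q - 1) := by
  rcases le_or_gt a q with h | h
  · have h' : (a : R) - q ≤ 0 := sub_nonpos.2 (by exact_mod_cast h)
    exact mul_nonneg_of_nonpos_of_nonpos h' (sub_nonpos.2 (h'.trans zero_le_one))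
  · have h' : 1 ≤ (a : R) - q := le_sub_iff_add_le'.2 (by exact_mod_cast h)
    exact mul_nonneg (zero_le_one.trans h') (sub_nonneg.2 h')

theorem cast_sub_mul_cast_sub_sub_one_eq_zero {R : Type*} [Ring R] [CharZero R] [NoZeroDivisors R]
    {a q : ℕ} :
    ((a : R) - q) * (a - q - 1) = 0 ↔ a = q ∨ a = q + 1 := by
  rw [mul_eq_zero, sub_eq_zero, sub_sub, sub_eq_zero]
  norm_cast

theorem exists_sum_eq_and_forall_eq_div_or_eq_div_add_one {k : ℕ} (hk : 0 < k) (n : ℕ) :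
    ∃ b : Fin k → ℕ, ∑ i, b i = n ∧ ∀ i, b i = n / k ∨ b i = n / k + 1 := by
  refine ⟨fun i => n / k + if (i : ℕ) < n % k then 1 else 0, ?_, fun i => ?_⟩
  · rw [sum_add_distrib, sum_boole, Fin.card_filter_val_lt, min_eq_right (Nat.mod_lt n hk).le]
    simp [Nat.div_add_mod]
  · dsimp only
    split_ifs <;> simp

theorem sum_sub_sq_eq {ι R : Type*} [CommRing R] (s : Finset ι) (f : ι → R) (c q : R) :
    ∑ i ∈ s, (f i - c) ^ 2 = ∑ i ∈ s, (f i - q) * (f i - q - 1)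
      + (2 * q + 1 - 2 * c) * ∑ i ∈ s, f i + #s * (c ^ 2 - q ^ 2 - q) := by
  rw [mul_sum, ← nsmul_eq_mul, ← sum_const, ← sum_add_distrib, ← sum_add_distrib]
  exact sum_congr rfl fun i _ => by ring

theorem sum_sub_sq_le_sum_sub_sq_iff {ι R : Type*} [CommRing R] [PartialOrder R] [IsOrderedRing R]
    (s : Finset ι) {f g : ι → R} (hfg : ∑ i ∈ s, f i = ∑ i ∈ s, g i) (c q : R) :
    ∑ i ∈ s, (f i - c) ^ 2 ≤ ∑ i ∈ s, (g i - c) ^ 2 ↔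
      ∑ i ∈ s, (f i - q) * (f i - q - 1) ≤ ∑ i ∈ s, (g i - q) * (g i - q - 1) := by
  rw [sum_sub_sq_eq s f c q, sum_sub_sq_eq s g c q, hfg]
  simp only [add_le_add_iff_right]

theorem forall_eq_div_or_eq_div_add_one_iff {ι : Type*} [Fintype ι] {x : ι → ℕ} {n : ℕ}
    (hx : ∑ i, x i = n) :
    (∀ i, x i = n / Fintype.card ι ∨ x i = n / Fintype.card ι + 1) ↔
      ∀ i, x i = n / Fintype.card ι ∨ x i = (n + Fintype.card ι - 1) / Fintype.card ι := by
  set k := Fintype.card ι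
  refine ⟨fun hbal i => (hbal i).imp_right fun hi => ?_, fun hbal i => ?_⟩
  · have hk : 0 < k := Fintype.card_pos_iff.2 ⟨i⟩
    refine hi.trans (Nat.add_sub_one_div_eq_div_add_one hk ?_).symm
    calc n / k * k = ∑ _j : ι, n / k := by simp [k, mul_comm]
      _ < ∑ j, x j := sum_lt_sum (fun j _ => (hbal j).elim ge_of_eq (by omega))
          ⟨i, mem_univ i, by omega⟩
      _ = n := hx
  · rcases hbal i with h | h
    · exact Or.inl h
    · exact h ▸ Nat.add_sub_one_div_eq_or n k

/-- For integer loads `x₁, …, x_k ≥ 0` summing to `n`, the population variance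
`Σ (x_i − n/k)² / k` is minimized (over all integer load vectors summing to `n`)
exactly when every load lies in `{⌊n/k⌋, ⌈n/k⌉}`. -/
theorem variance_minimized_iff_balanced
    (k : ℕ) (hk : 1 ≤ k) (n : ℕ) (x : Fin k → ℕ) (hx : ∑ i, x i = n) :
    (∀ y : Fin k → ℕ, (∑ i, y i = n) →
        (∑ i, ((x i : ℝ) - (n : ℝ) / (k : ℝ)) ^ 2) / (k : ℝ)
          ≤ (∑ i, ((y i : ℝ) - (n : ℝ) / (k : ℝ)) ^ 2) / (k : ℝ))
      ↔ (∀ i, x i = n / k ∨ x i = (n + k - 1) / k) := by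
  set q := n / k
  have gap_nonneg (y : Fin k → ℕ) : 0 ≤ ∑ i, ((y i : ℝ) - q) * (y i - q - 1) :=
    sum_nonneg fun i _ => cast_sub_mul_cast_sub_sub_one_nonneg (y i) q
  have gap_eq_zero (y : Fin k → ℕ) :
      ∑ i, ((y i : ℝ) - q) * (y i - q - 1) = 0 ↔ ∀ i, y i = q ∨ y i = q + 1 := by
    simp only [sum_eq_zero_iff_of_nonneg fun i _ => cast_sub_mul_cast_sub_sub_one_nonneg (y i) q,
      mem_univ, true_imp_iff, cast_sub_mul_cast_sub_sub_one_eq_zero]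
  have variance_le_iff (y : Fin k → ℕ) (hy : ∑ i, y i = n) :
      (∑ i, ((x i : ℝ) - n / k) ^ 2) / k ≤ (∑ i, ((y i : ℝ) - n / k) ^ 2) / k ↔
        ∑ i, ((x i : ℝ) - q) * (x i - q - 1) ≤ ∑ i, ((y i : ℝ) - q) * (y i - q - 1) := by
    rw [div_le_div_iff_of_pos_right (by positivity)]
    exact sum_sub_sq_le_sum_sub_sq_iff univ (by exact_mod_cast hx.trans hy.symm) _ _
  have balanced_iff := forall_eq_div_or_eq_div_add_one_iff hx
  rw [Fintype.card_fin] at balanced_iff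
  rw [← balanced_iff, ← gap_eq_zero]
  obtain ⟨b, hb, hb_bal⟩ := exists_sum_eq_and_forall_eq_div_or_eq_div_add_one hk n
  constructor
  · intro hmin
    refine le_antisymm ?_ (gap_nonneg x)
    exact ((variance_le_iff b hb).1 (hmin b hb)).trans ((gap_eq_zero b).2 hb_bal).le
  · intro hx_gap y hy
    rw [variance_le_iff y hy, hx_gap]
    exact gap_nonneg y
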